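/- arXiv:2209.03897 — 3 statements merged into one kernel-verified Lean document; each statement's English description precedes it below -/
import Mathlib

section
/- For a locally finite tree T and any vertex r of T, every embedding of T into itself that fixes r is surjective (i.e., every self-embedding of the rooted tree (T, r) is an automorphism). -/
lemma ball_finite {V : Type*} (G : SimpleGraph V) (hc : G.Connected)
    (hlf : ∀ v, (G.neighborSet v).Finite) (r : V) :
    ∀ n : ℕ, {v | G.dist r v ≤ n}.Finite := by
  intro n
  induction n with
  | zero =>
    apply Set.Finite.subset (Set.finite_singleton r)
    intro v hv
    simp only [Set.mem_setOf_eq, Nat.le_zero] at hv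
    exact ((hc.dist_eq_zero_iff).mp hv).symm ▸ rfl
  | succ n ih =>
    apply Set.Finite.subset (ih.union (Set.Finite.biUnion ih (fun u _ => hlf u)))
    intro v hv
    simp only [Set.mem_setOf_eq] at hv
    rcases Nat.lt_or_ge (G.dist r v) (n+1) with h | h
    · exact Or.inl (Nat.lt_succ_iff.mp h)
    · have hd : G.dist r v = n + 1 := le_antisymm hv h
      obtain ⟨p, hp⟩ := hc.exists_walk_length_eq_dist r v
      rw [hd] at hp
      cases hrev : p.reverse with
      | nil =>
        exfalso
        have := congrArg SimpleGraph.Walk.length hrev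
        simp [hp] at this
      | cons hadj q =>
        right
        refine Set.mem_biUnion (x := _) ?_ hadj.symm
        simp only [Set.mem_setOf_eq]
        have : G.dist r _ ≤ q.reverse.length := SimpleGraph.dist_le q.reverse
        have hl : q.length = n := by
          have := congrArg SimpleGraph.Walk.length hrev
          simp [hp] at this
          omega
        simpa [hl] using this

/-- Every self-embedding of a rooted locally finite tree is surjective. -/
theorem stmt_4 {V : Type*} (G : SimpleGraph V)
    (hG : G.IsTree) (hlf : ∀ v, (G.neighborSet v).Finite)
    (r : V) (f : G →g G) (hf : Function.Injective f) (hr : f r = r) :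
    Function.Surjective f := by
  have hc := hG.isConnected
  intro v
  set n := G.dist r v with hn
  have hfin := ball_finite G hc hlf r n
  have hmaps : Set.MapsTo f {u | G.dist r u ≤ n} {u | G.dist r u ≤ n} := by
    intro u hu
    simp only [Set.mem_setOf_eq] at hu ⊢
    obtain ⟨p, hp⟩ := hc.exists_walk_length_eq_dist r u
    calc G.dist r (f u) = G.dist (f r) (f u) := by rw [hr]
      _ ≤ (p.map f).length := SimpleGraph.dist_le _
      _ = p.length := p.length_map f
      _ ≤ n := by omega
  have hbij := (hfin.injOn_iff_bijOn_of_mapsTo hmaps).mp (hf.injOn)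
  obtain ⟨u, _, hu⟩ := hbij.surjOn (show v ∈ {u | G.dist r u ≤ n} from le_refl n)
  exact ⟨u, hu⟩
end

section
/- If a tree T is not nearly finite (has infinitely many vertices of degree ≥ 3) and is locally finite, then the minimal subtree of T containing all vertices of degree at least 3 contains a ray, and this ray passes through infinitely many vertices of degree at least 3 in T. -/
/-!
Root the tree at a vertex `a` of degree at least 3. By local finiteness and pigeonhole
(König's lemma), there is a geodesic ray from `a` such that infinitely many vertices of
degree at least 3 lie beyond each of its vertices, which puts the ray inside the minimal
subtree. If only finitely many vertices of the ray had degree at least 3, then from some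
point on every ray vertex would have exactly the two ray neighbours, so a geodesic from `a`
through such a vertex to a vertex of degree at least 3 would have to follow the ray forever.
-/

/-- A ray in a graph. -/
def IsRay {V : Type*} (G : SimpleGraph V) (r : ℕ → V) : Prop :=
  Function.Injective r ∧ ∀ n, G.Adj (r n) (r (n + 1))

/-- The minimal subtree of a tree containing a set `S` of vertices: the union of all
paths between vertices of `S` (a vertex `v` lies on the path from `a` to `b` iff
`dist a v + dist v b = dist a b`). -/
def MinSubtree {V : Type*} (G : SimpleGraph V) (S : Set V) : Set V :=
  {v | ∃ a ∈ S, ∃ b ∈ S, G.dist a v + G.dist v b = G.dist a b}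

namespace SimpleGraph

variable {V : Type*} {G : SimpleGraph V}

variable (G) in
def OnGeodesic (a v b : V) : Prop :=
  G.dist a v + G.dist v b = G.dist a b

lemma Connected.exists_adj_onGeodesic (hc : G.Connected) {a v b : V}
    (h : G.OnGeodesic a v b) (hvb : v ≠ b) :
    ∃ w, G.Adj v w ∧ G.dist a w = G.dist a v + 1 ∧ G.OnGeodesic a w b := by
  obtain ⟨p, hp⟩ := (hc v b).exists_walk_length_eq_dist
  cases p with
  | nil => exact absurd rfl hvb
  | @cons _ w _ hvw q =>
    have hwb : G.dist w b ≤ q.length := G.dist_le q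
    have hvb' : q.length + 1 = G.dist v b := by simpa using hp
    have hab : G.dist a b ≤ G.dist a w + G.dist w b := hc.dist_triangle
    have haw : G.dist a w ≤ G.dist a v + G.dist v w := hc.dist_triangle
    have hvw' : G.dist v w = 1 := dist_eq_one_iff_adj.mpr hvw
    unfold OnGeodesic at h ⊢
    exact ⟨w, hvw, by omega, by omega⟩

lemma Connected.exists_adj_infinite_onGeodesic [G.LocallyFinite] (hc : G.Connected)
    {S : Set V} {a v : V} (hv : {b ∈ S | G.OnGeodesic a v b}.Infinite) :
    ∃ w, G.Adj v w ∧ G.dist a w = G.dist a v + 1 ∧ {b ∈ S | G.OnGeodesic a w b}.Infinite := by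
  by_contra! hfin
  have hcover : {b ∈ S | G.OnGeodesic a v b} \ {v} ⊆
      ⋃ w ∈ {w | G.Adj v w ∧ G.dist a w = G.dist a v + 1}, {b ∈ S | G.OnGeodesic a w b} := by
    rintro b ⟨⟨hbS, hb⟩, hbv⟩
    obtain ⟨w, hvw, hw, hwb⟩ := hc.exists_adj_onGeodesic hb (Ne.symm hbv)
    exact Set.mem_biUnion ⟨hvw, hw⟩ ⟨hbS, hwb⟩
  refine (hv.sdiff (Set.finite_singleton v)).mono hcover ?_
  exact ((G.neighborSet v).toFinite.subset fun w hw => hw.1).biUnion fun w hw => hfin w hw.1 hw.2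

lemma Connected.exists_geodesic_ray [G.LocallyFinite] (hc : G.Connected) {S : Set V}
    (hS : S.Infinite) (a : V) :
    ∃ r : ℕ → V, r 0 = a ∧ (∀ n, G.Adj (r n) (r (n + 1))) ∧ (∀ n, G.dist a (r n) = n) ∧
      ∀ n, {b ∈ S | G.OnGeodesic a (r n) b}.Infinite := by
  choose! next hadj hdist hnext using fun v (hv : {b ∈ S | G.OnGeodesic a v b}.Infinite) =>
    hc.exists_adj_infinite_onGeodesic hv
  set r : ℕ → V := fun n => next^[n] a
  have hsucc (n : ℕ) : r (n + 1) = next (r n) := Function.iterate_succ_apply' ..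
  have hinf (n : ℕ) : {b ∈ S | G.OnGeodesic a (r n) b}.Infinite := by
    induction n with
    | zero => simpa [r, OnGeodesic] using hS
    | succ n ih => exact hsucc n ▸ hnext _ ih
  refine ⟨r, rfl, fun n => hsucc n ▸ hadj _ (hinf n), fun n => ?_, hinf⟩
  induction n with
  | zero => simp [r]
  | succ n ih => rw [hsucc, hdist _ (hinf n), ih]

lemma eq_or_eq_of_degree_le_two {v x y w : V} [Fintype (G.neighborSet v)]
    (hdeg : G.degree v ≤ 2) (hx : G.Adj v x) (hy : G.Adj v y) (hxy : x ≠ y) (hw : G.Adj v w) :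
    w = x ∨ w = y := by
  classical
  by_contra! hne
  have hsub : ({w, x, y} : Finset V) ⊆ G.neighborFinset v := by
    intro u hu
    simp only [Finset.mem_insert, Finset.mem_singleton] at hu
    rcases hu with rfl | rfl | rfl <;> simpa
  have hcard : ({w, x, y} : Finset V).card = 3 := by
    rw [Finset.card_insert_of_notMem (by simp [hne.1, hne.2]),
      Finset.card_insert_of_notMem (by simp [hxy]), Finset.card_singleton]
  have := Finset.card_le_card hsub
  rw [hcard, card_neighborFinset_eq_degree] at this
  omega

section GeodesicRay

variable {r : ℕ → V} (hadj : ∀ n, G.Adj (r n) (r (n + 1)))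
  (hdist : ∀ n, G.dist (r 0) (r n) = n)
include hdist

lemma injective_of_dist_eq : Function.Injective r := fun m n h => by
  simpa [hdist, h] using (hdist m).symm

variable [G.LocallyFinite]
include hadj

lemma Connected.onGeodesic_succ (hc : G.Connected) {n : ℕ} {b : V} (hn : 1 ≤ n)
    (hdeg : G.degree (r n) ≤ 2) (hb : G.OnGeodesic (r 0) (r n) b) (hbn : b ≠ r n) :
    G.OnGeodesic (r 0) (r (n + 1)) b := by
  obtain ⟨w, hw, hwdist, hwb⟩ := hc.exists_adj_onGeodesic hb hbn.symm
  have hpred : G.Adj (r n) (r (n - 1)) := by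
    simpa [Nat.sub_add_cancel hn] using (hadj (n - 1)).symm
  have hne : r (n - 1) ≠ r (n + 1) := fun h => by
    have := injective_of_dist_eq hdist h
    omega
  rcases eq_or_eq_of_degree_le_two hdeg hpred (hadj n) hne hw with rfl | rfl
  · rw [hdist, hdist] at hwdist
    omega
  · exact hwb

lemma Connected.mem_range_of_onGeodesic (hc : G.Connected) {N : ℕ} {b : V} (hN : 1 ≤ N)
    (hdeg : ∀ n, N ≤ n → G.degree (r n) ≤ 2) (hb : G.OnGeodesic (r 0) (r N) b) :
    b ∈ Set.range r := by
  by_contra hbr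
  have hgeo (k : ℕ) : G.OnGeodesic (r 0) (r (N + k)) b := by
    induction k with
    | zero => exact hb
    | succ k ih =>
      exact hc.onGeodesic_succ (n := N + k) hadj hdist (by omega) (hdeg _ (by omega)) ih
        fun h => hbr ⟨_, h.symm⟩
  have := hgeo (G.dist (r 0) b + 1)
  rw [OnGeodesic, hdist] at this
  omega

lemma Connected.infinite_setOf_three_le_degree (hc : G.Connected)
    (hbranch : ∀ n, ∃ b, 3 ≤ G.degree b ∧ G.OnGeodesic (r 0) (r n) b) :
    {n | 3 ≤ G.degree (r n)}.Infinite := by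
  refine Set.infinite_of_not_bddAbove fun ⟨M, hM⟩ => ?_
  obtain ⟨b, hb3, hb⟩ := hbranch (M + 1)
  have hdeg (n : ℕ) (hn : M + 1 ≤ n) : G.degree (r n) ≤ 2 := by
    by_contra h
    have : n ≤ M := hM (show 3 ≤ G.degree (r n) by omega)
    omega
  obtain ⟨n, rfl⟩ := hc.mem_range_of_onGeodesic hadj hdist (by omega) hdeg hb
  have : n ≤ M := hM hb3
  rw [OnGeodesic, hdist, hdist] at hb
  omega

end GeodesicRay

end SimpleGraph

/-- If a locally finite tree has infinitely many vertices of degree ≥ 3, then the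
minimal subtree containing all such vertices contains a ray which passes through
infinitely many vertices of degree at least 3. -/
theorem stmt_8 {V : Type*} (G : SimpleGraph V) (hG : G.IsTree)
    [∀ v, Fintype (G.neighborSet v)]
    (hinf : {v : V | 3 ≤ G.degree v}.Infinite) :
    ∃ r : ℕ → V, IsRay G r ∧
      Set.range r ⊆ MinSubtree G {v : V | 3 ≤ G.degree v} ∧
      {n : ℕ | 3 ≤ G.degree (r n)}.Infinite := by
  have hc := hG.connected
  obtain ⟨a, ha⟩ := hinf.nonempty
  obtain ⟨r, rfl, hadj, hdist, hbeyond⟩ := hc.exists_geodesic_ray hinf a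
  have hbranch (n : ℕ) : ∃ b, 3 ≤ G.degree b ∧ G.OnGeodesic (r 0) (r n) b :=
    (hbeyond n).nonempty
  refine ⟨r, ⟨SimpleGraph.injective_of_dist_eq hdist, hadj⟩, ?_,
    hc.infinite_setOf_three_le_degree hadj hdist hbranch⟩
  rintro _ ⟨n, rfl⟩
  obtain ⟨b, hb, hgeo⟩ := hbranch n
  exact ⟨r 0, ha, b, hb, hgeo⟩
end

section
/- Let T be a locally finite tree, f a parabolic self-embedding of T preserving the maximal ray R_f forward, and suppose every branch T^f_r (r ∈ R_f) is nearly finite. If some vertex of T has degree at least 3, then every non-elliptic self-embedding g of T satisfies g⁺ = f⁺, i.e., all non-elliptic embeddings of T have the same direction as f. -/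
/-- A set of vertices is (the vertex set of) a ray. -/
def IsRaySet {V : Type*} (G : SimpleGraph V) (s : Set V) : Prop :=
  ∃ r : ℕ → V, IsRay G r ∧ Set.range r = s

/-- Two rays are equivalent (belong to the same end) if their intersection is a ray. -/
def RayEquiv {V : Type*} (G : SimpleGraph V) (r₁ r₂ : ℕ → V) : Prop :=
  IsRaySet G (Set.range r₁ ∩ Set.range r₂)

/-- A self-embedding is elliptic if it fixes a nonempty finite subtree setwise. -/
def Elliptic {V : Type*} (G : SimpleGraph V) (f : G →g G) : Prop :=
  ∃ s : Set V, s.Nonempty ∧ s.Finite ∧ (G.induce s).Connected ∧ ⇑f '' s = s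

/-- `f` fixes the end of the ray `ρ`: the image ray is equivalent to `ρ`. -/
def FixesEnd {V : Type*} (G : SimpleGraph V) (f : G →g G) (ρ : ℕ → V) : Prop :=
  RayEquiv G (⇑f ∘ ρ) ρ

/-- A self-embedding is parabolic if it is not elliptic and fixes exactly one end. -/
def Parabolic {V : Type*} (G : SimpleGraph V) (f : G →g G) : Prop :=
  ¬ Elliptic G f ∧ ∃ ρ : ℕ → V, IsRay G ρ ∧ FixesEnd G f ρ ∧
    ∀ ρ' : ℕ → V, IsRay G ρ' → FixesEnd G f ρ' → RayEquiv G ρ ρ'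

/-- `r` is the maximal ray mapped (properly) into itself by `f`. -/
def IsMaxPreservedRay {V : Type*} (G : SimpleGraph V) (f : G →g G) (r : ℕ → V) : Prop :=
  IsRay G r ∧ ⇑f '' Set.range r ⊂ Set.range r ∧
    ∀ r' : ℕ → V, IsRay G r' → ⇑f '' Set.range r' ⊆ Set.range r' →
      Set.range r' ⊆ Set.range r

/-- The branch of the tree at the vertex `r i` of the ray `r`. -/
def BranchAt {V : Type*} (G : SimpleGraph V) (r : ℕ → V) (i : ℕ) : Set V :=
  {v | ∀ j, G.dist v (r j) = G.dist v (r i) + G.dist (r i) (r j)}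

/-!
If `ρ` is not equivalent to `r`, it eventually leaves `r` for good and from then on runs
inside a single branch `BranchAt G r i`. A non-elliptic `g` preserving `ρ` shifts it by some
`t ≥ 1`, so the `g`-orbit of a vertex of degree at least `3` stays at constant distance from
`ρ (n * t)` and hence goes arbitrarily deep into that branch, which has only finitely many such
vertices.

All the tree geometry needed comes from one fact: a vertex has at most one neighbour closer to
a given vertex (`SimpleGraph.IsTree.eq_of_adj_of_dist_lt`).
-/

open Set Filter Function

lemma Nat.eq_add_of_forall_dist_eq {σ : ℕ → ℕ} (h : ∀ m n, (σ m).dist (σ n) = m.dist n)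
    (n : ℕ) : σ n = σ 0 + n := by
  have h₁ := h n 0
  have h₂ := h (n + σ 0 + 1) 0
  have h₃ := h n (n + σ 0 + 1)
  simp only [Nat.dist] at h₁ h₂ h₃
  omega

namespace SimpleGraph

variable {V : Type*} {G : SimpleGraph V}

lemma Connected.exists_adj_dist_lt (hG : G.Connected) {x w : V} (hne : x ≠ w) :
    ∃ z, G.Adj x z ∧ G.dist z w < G.dist x w := by
  obtain ⟨p, hp⟩ := hG.exists_walk_length_eq_dist x w
  cases p with
  | nil => exact absurd rfl hne
  | cons h q =>
    refine ⟨_, h, ?_⟩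
    have := dist_le q
    rw [Walk.length_cons] at hp
    omega

lemma IsTree.dist_eq_length_of_isPath (hG : G.IsTree) {u v : V} {p : G.Walk u v}
    (hp : p.IsPath) : G.dist u v = p.length := by
  obtain ⟨q, hq, hql⟩ := hG.connected.exists_path_of_dist u v
  rw [← hql, (hG.existsUnique_path u v).unique hq hp]

lemma IsTree.dist_map_of_injective (hG : G.IsTree) {g : G →g G} (hg : Injective g) (u v : V) :
    G.dist (g u) (g v) = G.dist u v := by
  obtain ⟨p, hp, hpl⟩ := hG.connected.exists_path_of_dist u v
  rw [hG.dist_eq_length_of_isPath (hp.map hg), Walk.length_map, hpl]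

lemma IsTree.dist_adj_cases (hG : G.IsTree) {x y : V} (hxy : G.Adj x y) (w : V) :
    G.dist x w = G.dist y w + 1 ∨ G.dist y w = G.dist x w + 1 := by
  simpa only [dist_comm (v := w)] using hG.dist_eq_dist_add_one_of_adj w hxy

lemma IsTree.eq_of_adj_of_dist_lt (hG : G.IsTree) {w x y z : V} (hy : G.Adj x y)
    (hz : G.Adj x z) (hyw : G.dist y w < G.dist x w) (hzw : G.dist z w < G.dist x w) :
    y = z := by
  have geodesic : ∀ u (hu : G.Adj x u), G.dist u w < G.dist x w →
      ∃ q : G.Walk u w, (Walk.cons hu q).IsPath := by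
    intro u hu hlt
    obtain ⟨q, hq⟩ := hG.connected.exists_walk_length_eq_dist u w
    refine ⟨q, (Walk.cons hu q).isPath_of_length_eq_dist ?_⟩
    have := dist_le (Walk.cons hu q)
    rw [Walk.length_cons] at this ⊢
    omega
  obtain ⟨qy, hqy⟩ := geodesic y hy hyw
  obtain ⟨qz, hqz⟩ := geodesic z hz hzw
  simpa using congrArg Walk.snd ((hG.existsUnique_path x w).unique hqy hqz)

end SimpleGraph

open SimpleGraph

namespace IsRay

variable {V : Type*} {G : SimpleGraph V} {ρ r : ℕ → V}

lemma dist_add (hG : G.IsTree) (hρ : IsRay G ρ) (m k : ℕ) :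
    G.dist (ρ (m + k)) (ρ m) = k := by
  induction k using Nat.twoStepInduction with
  | zero => simp
  | one => exact dist_eq_one_iff_adj.mpr (hρ.2 m).symm
  | more k ih₀ ih₁ =>
    change G.dist (ρ (m + k + 1)) (ρ m) = k + 1 at ih₁
    change G.dist (ρ (m + k + 1 + 1)) (ρ m) = k + 2
    rcases hG.dist_adj_cases (hρ.2 (m + k + 1)) (ρ m) with h | h
    · -- two neighbours of `ρ (m + k + 1)` closer to `ρ m` would coincide
      have := hG.eq_of_adj_of_dist_lt (w := ρ m) (hρ.2 (m + k)).symm (hρ.2 (m + k + 1))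
        (by omega) (by omega)
      exact absurd (hρ.1 this) (by omega)
    · omega

lemma dist_eq (hG : G.IsTree) (hρ : IsRay G ρ) (m n : ℕ) :
    G.dist (ρ m) (ρ n) = m.dist n := by
  rcases le_total m n with h | h
  · obtain ⟨k, rfl⟩ := Nat.exists_eq_add_of_le h
    rw [dist_comm, hρ.dist_add hG, Nat.dist_eq_sub_of_le h]
    omega
  · obtain ⟨k, rfl⟩ := Nat.exists_eq_add_of_le h
    rw [hρ.dist_add hG, Nat.dist_eq_sub_of_le_right h]
    omega

lemma exists_shift (hG : G.IsTree) (hρ : IsRay G ρ) {g : G →g G} (hg : Injective g)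
    (hmaps : g '' range ρ ⊆ range ρ) : ∃ t, ∀ n, g (ρ n) = ρ (n + t) := by
  choose σ hσ using fun n ↦ hmaps ⟨ρ n, ⟨n, rfl⟩, rfl⟩
  have hσ_dist : ∀ m n, (σ m).dist (σ n) = m.dist n := fun m n ↦ by
    rw [← hρ.dist_eq hG, ← hρ.dist_eq hG, hσ, hσ, hG.dist_map_of_injective hg]
  exact ⟨σ 0, fun n ↦ by rw [← hσ, Nat.eq_add_of_forall_dist_eq hσ_dist n, add_comm]⟩

lemma exists_adj_dist_lt (hG : G.IsTree) (hr : IsRay G r) {i j : ℕ} (hij : i ≠ j) :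
    ∃ k, G.Adj (r i) (r k) ∧ G.dist (r k) (r j) < G.dist (r i) (r j) := by
  simp only [hr.dist_eq hG, Nat.dist]
  rcases lt_or_gt_of_ne hij with h | h
  · exact ⟨i + 1, hr.2 i, by omega⟩
  · obtain ⟨k, rfl⟩ := Nat.exists_eq_add_of_lt h
    exact ⟨j + k, (hr.2 (j + k)).symm, by omega⟩

lemma rayEquiv_of_frequently_mem (hG : G.IsTree) (hρ : IsRay G ρ) (hr : IsRay G r)
    (h : ∃ᶠ n in atTop, ρ n ∈ range r) : RayEquiv G ρ r := by
  classical
  have hex : ∃ n, ρ n ∈ range r := h.exists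
  obtain ⟨m₀, hm₀⟩ := Nat.find_spec hex
  set n₀ := Nat.find hex
  have htail : ∀ s, ρ (n₀ + s) = r (m₀ + s) := by
    intro s
    induction s with
    | zero => exact hm₀.symm
    | succ s ih =>
      obtain ⟨n, hn, m, hm⟩ := frequently_atTop.mp h (n₀ + m₀ + s + 1)
      have hnm : n₀.dist n = m₀.dist m := by
        rw [← hρ.dist_eq hG, ← hr.dist_eq hG, hm₀, hm]
      show ρ (n₀ + s + 1) = r (m₀ + s + 1)
      -- both are neighbours of `ρ (n₀ + s) = r (m₀ + s)` closer to `ρ n = r m`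
      refine hG.eq_of_adj_of_dist_lt (w := ρ n) (hρ.2 (n₀ + s)) (ih ▸ hr.2 (m₀ + s)) ?_ ?_
      · simp only [hρ.dist_eq hG, Nat.dist]
        omega
      · simp only [← hm, ih, hr.dist_eq hG, Nat.dist] at hnm ⊢
        omega
  have hrange : range ρ ∩ range r = range fun s ↦ ρ (n₀ + s) := by
    ext x
    constructor
    · rintro ⟨⟨n, rfl⟩, hn⟩
      exact ⟨n - n₀, congrArg ρ (Nat.add_sub_cancel' (Nat.find_min' hex hn))⟩
    · rintro ⟨s, rfl⟩
      exact ⟨⟨_, rfl⟩, ⟨_, (htail s).symm⟩⟩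
  exact ⟨_, ⟨fun a b hab ↦ by simpa using hρ.1 hab, fun s ↦ hρ.2 (n₀ + s)⟩,
    hrange.symm⟩

end IsRay

section Branch

variable {V : Type*} {G : SimpleGraph V} {r : ℕ → V} {i : ℕ} {x y : V}

lemma self_mem_branchAt (r : ℕ → V) (i : ℕ) : r i ∈ BranchAt G r i := fun j ↦ by simp

lemma mem_branchAt_of_adj (hG : G.IsTree) (hr : IsRay G r) (hx : x ∈ BranchAt G r i)
    (hxy : G.Adj x y) (hy : y ∉ range r) : y ∈ BranchAt G r i := by
  intro j
  have hxj := hx j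
  have htri : G.dist y (r j) ≤ G.dist y (r i) + G.dist (r i) (r j) := hG.connected.dist_triangle
  rcases hG.dist_adj_cases hxy (r i) with hi | hi
  · rcases hG.dist_adj_cases hxy (r j) with hj | hj <;> omega
  by_contra hne
  have hj : G.dist y (r j) < G.dist x (r j) := by
    rcases hG.dist_adj_cases hxy (r j) with hj | hj <;> omega
  -- a second neighbour `z ≠ y` of `x` closer to `r j` contradicts uniqueness
  obtain ⟨z, hxz, hzj, hzy⟩ :
      ∃ z, G.Adj x z ∧ G.dist z (r j) < G.dist x (r j) ∧ z ≠ y := by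
    by_cases hxi : x = r i
    · subst hxi
      obtain ⟨k, hk, hkj⟩ :=
        hr.exists_adj_dist_lt hG (i := i) (j := j) (by rintro rfl; simp at hj)
      exact ⟨r k, hk, hkj, fun h ↦ hy ⟨k, h⟩⟩
    · obtain ⟨z, hxz, hzi⟩ := hG.connected.exists_adj_dist_lt hxi
      have : G.dist z (r j) ≤ G.dist z (r i) + G.dist (r i) (r j) := hG.connected.dist_triangle
      exact ⟨z, hxz, by omega, by rintro rfl; omega⟩
  exact hzy (hG.eq_of_adj_of_dist_lt hxz hxy hzj hj)

lemma mem_branchAt_of_walk (hG : G.IsTree) (hr : IsRay G r) (p : G.Walk x y)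
    (hx : x ∈ BranchAt G r i) (hp : ∀ v ∈ p.support.tail, v ∉ range r) :
    y ∈ BranchAt G r i := by
  induction p with
  | nil => exact hx
  | cons h p ih =>
    simp only [Walk.support_cons, List.tail_cons] at hp
    exact ih (mem_branchAt_of_adj hG hr hx h (hp _ p.start_mem_support)) fun v hv ↦
      hp v (List.mem_of_mem_tail hv)

lemma mem_branchAt_of_dist_lt (hG : G.IsTree) (hr : IsRay G r) (hx : x ∈ BranchAt G r i)
    (hxy : G.dist x y < G.dist x (r i)) : y ∈ BranchAt G r i := by
  classical
  obtain ⟨p, hp⟩ := hG.connected.exists_walk_length_eq_dist x y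
  refine mem_branchAt_of_walk hG hr p hx fun v hv ⟨j, hj⟩ ↦ ?_
  have := dist_le (p.takeUntil v (List.mem_of_mem_tail hv))
  have := p.length_takeUntil_le_length (List.mem_of_mem_tail hv)
  have := hx j
  subst hj
  omega

lemma exists_mem_branchAt (hG : G.IsTree) (hr : IsRay G r) (v : V) :
    ∃ i, v ∈ BranchAt G r i := by
  suffices ∀ u w (p : G.Walk u w), (∃ i, w ∈ BranchAt G r i) →
      ∃ i, u ∈ BranchAt G r i from
    this v (r 0) (hG.connected v (r 0)).some ⟨0, self_mem_branchAt r 0⟩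
  intro u w p hw
  induction p with
  | nil => exact hw
  | @cons u _ _ h p ih =>
    obtain ⟨i, hi⟩ := ih hw
    by_cases hu : u ∈ range r
    · obtain ⟨k, rfl⟩ := hu
      exact ⟨k, self_mem_branchAt r k⟩
    · exact ⟨i, mem_branchAt_of_adj hG hr hi h.symm hu⟩

end Branch

section Embedding

variable {V : Type*} {G : SimpleGraph V} {ρ r : ℕ → V}

lemma exists_forall_ge_mem_branchAt (hG : G.IsTree) (hr : IsRay G r)
    (hρ : ∀ n, G.Adj (ρ n) (ρ (n + 1))) {N : ℕ} (hN : ∀ n ≥ N, ρ n ∉ range r) :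
    ∃ i, ∀ n ≥ N, ρ n ∈ BranchAt G r i := by
  obtain ⟨i, hi⟩ := exists_mem_branchAt hG hr (ρ N)
  refine ⟨i, fun n hn ↦ ?_⟩
  induction n, hn using Nat.le_induction with
  | base => exact hi
  | succ n hn ih => exact mem_branchAt_of_adj hG hr ih (hρ n) (hN (n + 1) (by omega))

lemma elliptic_of_map_eq {g : G →g G} {x : V} (hx : g x = x) : Elliptic G g :=
  ⟨{x}, singleton_nonempty x, finite_singleton x,
    (connected_iff _).mpr ⟨.of_subsingleton, inferInstance⟩, by rw [image_singleton, hx]⟩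

lemma exists_le_degree_dist_eq_of_shift [∀ v, Fintype (G.neighborSet v)] (hG : G.IsTree)
    {g : G →g G} (hg : Injective g) {t : ℕ} (ht : ∀ n, g (ρ n) = ρ (n + t))
    {k : ℕ} {v : V} (hv : k ≤ G.degree v) (n : ℕ) :
    ∃ w, k ≤ G.degree w ∧ G.dist w (ρ (n * t)) = G.dist v (ρ 0) := by
  induction n with
  | zero => exact ⟨v, hv, by simp⟩
  | succ n ih =>
    obtain ⟨w, hw, hwd⟩ := ih
    refine ⟨g w, hw.trans ((g.toCopy hg).degree_le w), ?_⟩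
    rw [Nat.succ_mul, ← ht, hG.dist_map_of_injective hg, hwd]

lemma exists_le_degree_mem_branchAt_lt_dist [∀ v, Fintype (G.neighborSet v)] (hG : G.IsTree)
    (hr : IsRay G r) (hρ : IsRay G ρ) {i N : ℕ} (hi : ∀ n ≥ N, ρ n ∈ BranchAt G r i)
    {g : G →g G} (hg : Injective g) {t : ℕ} (ht₀ : t ≠ 0)
    (ht : ∀ n, g (ρ n) = ρ (n + t)) {k : ℕ} {v : V} (hv : k ≤ G.degree v) (B : ℕ) :
    ∃ w ∈ BranchAt G r i, k ≤ G.degree w ∧ B < G.dist w (r i) := by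
  -- `n` is large enough that `ρ (n * t)` lies deeper than `dist v (ρ 0) + B` in the branch
  set n := N + G.dist (ρ N) (r i) + G.dist v (ρ 0) + B + 1
  obtain ⟨w, hw, hwd⟩ := exists_le_degree_dist_eq_of_shift hG hg ht hv n
  have hnt : n ≤ n * t := Nat.le_mul_of_pos_right n (Nat.pos_of_ne_zero ht₀)
  have hρN : G.dist (ρ N) (ρ (n * t)) = n * t - N := by
    rw [hρ.dist_eq hG, Nat.dist_eq_sub_of_le (by omega)]
  have hdeep : G.dist v (ρ 0) + B < G.dist (ρ (n * t)) (r i) := by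
    have := hG.connected.dist_triangle (u := ρ N) (v := r i) (w := ρ (n * t))
    rw [SimpleGraph.dist_comm (u := r i)] at this
    omega
  rw [SimpleGraph.dist_comm] at hwd
  refine ⟨w, mem_branchAt_of_dist_lt hG hr (hi (n * t) (by omega)) (by omega), hw, ?_⟩
  have := hG.connected.dist_triangle (u := ρ (n * t)) (v := w) (w := r i)
  omega

end Embedding

theorem stmt_16_general {V : Type*} (G : SimpleGraph V)
    (hG : G.IsTree) [∀ v, Fintype (G.neighborSet v)]
    (f : G →g G)
    (r : ℕ → V) (hmax : IsMaxPreservedRay G f r)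
    (hnf : ∀ i, {v ∈ BranchAt G r i | 3 ≤ G.degree v}.Finite)
    (hdeg : ∃ v, 3 ≤ G.degree v) :
    ∀ g : G →g G, Function.Injective g → ¬ Elliptic G g →
      ∀ ρ : ℕ → V, IsRay G ρ → ⇑g '' Set.range ρ ⊆ Set.range ρ →
        RayEquiv G ρ r := by
  intro g hg hell ρ hρ hmaps
  have hr := hmax.1
  by_contra hne
  obtain ⟨N, hN⟩ := eventually_atTop.mp
    (not_frequently.mp (mt (hρ.rayEquiv_of_frequently_mem hG hr) hne))
  obtain ⟨i, hi⟩ := exists_forall_ge_mem_branchAt hG hr hρ.2 hN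
  obtain ⟨t, ht⟩ := hρ.exists_shift hG hg hmaps
  have ht₀ : t ≠ 0 := by
    rintro rfl
    exact hell (elliptic_of_map_eq (ht 0))
  obtain ⟨B, hB⟩ := ((hnf i).image fun u ↦ G.dist u (r i)).bddAbove
  obtain ⟨v, hv⟩ := hdeg
  obtain ⟨w, hwi, hw, hwB⟩ :=
    exists_le_degree_mem_branchAt_lt_dist hG hr hρ hi hg ht₀ ht hv B
  exact (hB ⟨w, ⟨hwi, hw⟩, rfl⟩).not_gt hwB

/-- Let `f` be a parabolic self-embedding of a locally finite tree with maximal ray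
`r`, all branches along `r` nearly finite, and suppose some vertex has degree ≥ 3.
Then every non-elliptic self-embedding `g` has the same direction as `f`: every ray
preserved forward by `g` is equivalent to `r`. -/
theorem stmt_16 {V : Type*} (G : SimpleGraph V)
    (hG : G.IsTree) [∀ v, Fintype (G.neighborSet v)]
    (f : G →g G) (hf : Function.Injective f) (hpar : Parabolic G f)
    (r : ℕ → V) (hmax : IsMaxPreservedRay G f r)
    (hnf : ∀ i, {v ∈ BranchAt G r i | 3 ≤ G.degree v}.Finite)
    (hdeg : ∃ v, 3 ≤ G.degree v) :
    ∀ g : G →g G, Function.Injective g → ¬ Elliptic G g →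
      ∀ ρ : ℕ → V, IsRay G ρ → ⇑g '' Set.range ρ ⊆ Set.range ρ →
        RayEquiv G ρ r :=
  stmt_16_general G hG f r hmax hnf hdeg
end
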